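/- Let Λ and L3 be natural numbers with 3 ≤ Λ < L3 and L3 even. Then the cardinality of the set of sextuples (a,b,c,d,e,f) in S(Λ,Λ,L3) satisfying a ≤ b equals the cardinality of the set of triples (a,b,c) of natural numbers satisfying 2a+1 ≤ Λ, a ≤ b, 2b+1 ≤ Λ, 2c+1 ≤ L3, 2Λ+2c ≥ L3+2a+2b, L3+2b ≥ 2a+2c, and L3+2a ≥ 2b+2c. -/

import Mathlib

/-!
The loop counts `(a, b, c)` determine the edge counts: `d + e`, `d + f`, `e + f` are
`L1 - 2a`, `L2 - 2b`, `L3 - 2c`. Conversely a triple of loop counts comes from a sextuple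
exactly when the resulting `d, e, f` are natural numbers (triangle inequalities, integrality
from the parity of the degree sum) and each pairwise sum is positive. So counting sextuples
with `a ≤ b` amounts to counting loop triples with `a ≤ b`.
-/

/-- The set of adjacency data `(a,b,c,d,e,f)` of connected multigraphs on three
nodes with degrees `L1, L2, L3`. -/
def S (L1 L2 L3 : ℕ) : Set (ℕ × ℕ × ℕ × ℕ × ℕ × ℕ) :=
  {(a, b, c, d, e, f) : ℕ × ℕ × ℕ × ℕ × ℕ × ℕ |
    2 * a + d + e = L1 ∧ 2 * b + d + f = L2 ∧ 2 * c + e + f = L3 ∧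
    1 ≤ d + e ∧ 1 ≤ d + f ∧ 1 ≤ e + f}

def loops (x : ℕ × ℕ × ℕ × ℕ × ℕ × ℕ) : ℕ × ℕ × ℕ := (x.1, x.2.1, x.2.2.1)

def loopTriples (L1 L2 L3 : ℕ) : Set (ℕ × ℕ × ℕ) :=
  {t | 2 * t.1 + 1 ≤ L1 ∧ 2 * t.2.1 + 1 ≤ L2 ∧ 2 * t.2.2 + 1 ≤ L3 ∧
    L3 + 2 * t.1 + 2 * t.2.1 ≤ L1 + L2 + 2 * t.2.2 ∧
    L2 + 2 * t.1 + 2 * t.2.2 ≤ L1 + L3 + 2 * t.2.1 ∧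
    L1 + 2 * t.2.1 + 2 * t.2.2 ≤ L2 + L3 + 2 * t.1}

theorem loops_injOn_S (L1 L2 L3 : ℕ) : Set.InjOn loops (S L1 L2 L3) := by
  rintro ⟨a, b, c, d, e, f⟩ hx ⟨a', b', c', d', e', f'⟩ hy h
  simp only [S, Set.mem_ofPred_eq] at hx hy
  simp only [loops, Prod.mk.injEq] at h
  obtain ⟨rfl, rfl, rfl⟩ := h
  simp only [Prod.mk.injEq, true_and]
  omega

theorem loops_image_S {L1 L2 L3 : ℕ} (heven : Even (L1 + L2 + L3)) :
    loops '' S L1 L2 L3 = loopTriples L1 L2 L3 := by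
  obtain ⟨m, hm⟩ := heven
  ext ⟨a, b, c⟩
  simp only [Set.mem_image, S, loopTriples, loops, Set.mem_ofPred_eq, Prod.exists,
    Prod.mk.injEq]
  constructor
  · rintro ⟨a, b, c, d, e, f, hx, rfl, rfl, rfl⟩
    omega
  · intro h
    -- `m` is half the degree sum, so `d = m - L3 - a - b + c` etc.
    refine ⟨a, b, c, m + c - L3 - a - b, m + b - L2 - a - c, m + a - L1 - b - c,
      ?_, rfl, rfl, rfl⟩
    omega

theorem count_two_smaller_degrees_equal (Λ L3 : ℕ)
    (heven : Even L3) :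
    {x ∈ S Λ Λ L3 | x.1 ≤ x.2.1}.ncard =
      {(a, b, c) : ℕ × ℕ × ℕ |
        2 * a + 1 ≤ Λ ∧ a ≤ b ∧ 2 * b + 1 ≤ Λ ∧ 2 * c + 1 ≤ L3 ∧
        L3 + 2 * a + 2 * b ≤ 2 * Λ + 2 * c ∧ 2 * a + 2 * c ≤ L3 + 2 * b ∧
        2 * b + 2 * c ≤ L3 + 2 * a}.ncard := by
  have hsep : {x ∈ S Λ Λ L3 | x.1 ≤ x.2.1} = S Λ Λ L3 ∩ loops ⁻¹' {t | t.1 ≤ t.2.1} := rfl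
  have hsum : Even (Λ + Λ + L3) := Even.add ⟨Λ, rfl⟩ heven
  rw [hsep, ← ((loops_injOn_S _ _ _).mono Set.inter_subset_left).ncard_image,
    Set.image_inter_preimage, loops_image_S hsum]
  congr 1
  ext ⟨a, b, c⟩
  simp only [loopTriples, Set.mem_inter_iff, Set.mem_ofPred_eq]
  omega
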